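/- Suppose the mixture of k spherical Gaussians satisfies ‖μ_i* − μ_j*‖ ≥ C (σ_i* ∨ σ_j*) √(log k + log(ρ_σ ρ_π)) for all i ≠ j, for a sufficiently large universal constant C ≥ 128. Then for each q ∈ {0, 1, 2, 3, 4}: Σ_{j≠1} (π_1* + π_j*) (R_{j1}*/σ_1*)^q exp(−(R_{j1}*)²/(128 (σ_1* ∨ σ_j*)²)) ≤ c_q π_1*, and likewise Σ_{j≠1} (π_1* + π_j*) (R_{j1}*/σ_j*)^q exp(−(R_{j1}*)²/(128 (σ_1* ∨ σ_j*)²)) ≤ c_q π_1*, where the c_q are absolute constants that can be made arbitrarily small by choosing C large enough. -/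

import Mathlib

open MeasureTheory Real
open scoped BigOperators ENNReal ProbabilityTheory RealInnerProductSpace

/-- The spherical Gaussian measure `N(μ, σ² I_d)` on `ℝ^d`, given by its density
with respect to Lebesgue measure. -/
noncomputable def sphericalGaussian (d : ℕ) (μ : EuclideanSpace ℝ (Fin d)) (σ : ℝ) :
    Measure (EuclideanSpace ℝ (Fin d)) :=
  volume.withDensity fun x =>
    ENNReal.ofReal ((2 * Real.pi * σ ^ 2) ^ (-(d : ℝ) / 2) *
      Real.exp (-‖x - μ‖ ^ 2 / (2 * σ ^ 2)))

/-- The mixture of `k` spherical Gaussians with mixing weights `p`, means `μ`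
and scale factors `σ`. -/
noncomputable def mixture (d k : ℕ) (p : Fin k → ℝ)
    (μ : Fin k → EuclideanSpace ℝ (Fin d)) (σ : Fin k → ℝ) :
    Measure (EuclideanSpace ℝ (Fin d)) :=
  ∑ j : Fin k, ENNReal.ofReal (p j) • sphericalGaussian d (μ j) (σ j)

/-- The EM E-step weight `w_i(x)` for parameters `(p, μ, v)`, where `v i` is the
*variance* (i.e. `σ_i²`) of the `i`-th component. -/
noncomputable def emWeight (d k : ℕ) (p : Fin k → ℝ)
    (μ : Fin k → EuclideanSpace ℝ (Fin d)) (v : Fin k → ℝ) (i : Fin k)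
    (x : EuclideanSpace ℝ (Fin d)) : ℝ :=
  p i * Real.exp (-‖x - μ i‖ ^ 2 / (2 * v i) - (d : ℝ) * Real.log (v i) / 2) /
    ∑ j : Fin k, p j * Real.exp (-‖x - μ j‖ ^ 2 / (2 * v j) - (d : ℝ) * Real.log (v j) / 2)

/-- Maximum of finitely many reals (as an indexed supremum). -/
noncomputable def finSup {k : ℕ} (f : Fin k → ℝ) : ℝ := ⨆ i, f i

/-- Minimum of finitely many reals (as an indexed infimum). -/
noncomputable def finInf {k : ℕ} (f : Fin k → ℝ) : ℝ := ⨅ i, f i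

/-! Write `t = R_{j1} / (σ_1 ∨ σ_j)` and `X = k ρ_σ ρ_π`. Each weight `π_1 + π_j` is at most
`2 ρ_π π_1`, each ratio `R_{j1} / σ` with `σ ∈ {σ_1, σ_j}` is at most `ρ_σ t`, and for `t ≥ 1`,
`q ≤ 4` one has `t^q e^{-t²/128} ≤ 2^17 e^{-t²/256}`. With `C = 128 m` the separation gives
`t² ≥ 256 m log X`, hence `e^{-t²/256} ≤ X^{-m}`. Summing the at most `k` terms and using
`k ρ_π ρ_σ⁴ ≤ X⁴` bounds each sum by `2^18 X^{4-m} π_1 ≤ 2^18 2^{4-m} π_1`, which is below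
`c_q π_1` for `m` large. -/

open Finset

section FinSupInf

variable {k : ℕ}

lemma finInf_le (f : Fin k → ℝ) (i : Fin k) : finInf f ≤ f i :=
  ciInf_le (Set.finite_range f).bddBelow i

lemma le_finSup (f : Fin k → ℝ) (i : Fin k) : f i ≤ finSup f :=
  le_ciSup (Set.finite_range f).bddAbove i

lemma finInf_pos [Nonempty (Fin k)] {f : Fin k → ℝ} (hf : ∀ i, 0 < f i) : 0 < finInf f := by
  obtain ⟨i, hi⟩ := exists_eq_ciInf_of_finite (f := f)
  rw [finInf, ← hi]
  exact hf i

lemma one_le_finSup_div_finInf {f : Fin k → ℝ} (hf : ∀ i, 0 < f i) (i : Fin k) :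
    1 ≤ finSup f / finInf f := by
  have : Nonempty (Fin k) := ⟨i⟩
  rw [one_le_div (finInf_pos hf)]
  exact (finInf_le f i).trans (le_finSup f i)

end FinSupInf

lemma add_le_two_mul_div_mul {a b x y : ℝ} (ha : 0 < a) (hax : a ≤ x) (hxb : x ≤ b)
    (hyb : y ≤ b) : x + y ≤ 2 * (b / a) * x := by
  have hb : b ≤ b / a * x :=
    calc b = b / a * a := by field_simp
      _ ≤ b / a * x := by gcongr; exact div_nonneg (by linarith) ha.le
  linarith

lemma div_le_div_mul_div {R σ s a b : ℝ} (hR : 0 ≤ R) (ha : 0 < a) (haσ : a ≤ σ) (hs : 0 < s)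
    (hsb : s ≤ b) : R / σ ≤ b / a * (R / s) :=
  calc R / σ ≤ R / a := div_le_div_of_nonneg_left hR ha haσ
    _ = b / a * (R / b) := by field_simp [(hs.trans_le hsb).ne']
    _ ≤ b / a * (R / s) := by gcongr; exact div_nonneg (by linarith) ha.le

lemma pow_four_mul_exp_neg_le (t : ℝ) :
    t ^ 4 * exp (-(t ^ 2 / 128)) ≤ 131072 * exp (-(t ^ 2 / 256)) := by
  have h := pow_div_factorial_le_exp (t ^ 2 / 256) (by positivity) 2
  have ht : t ^ 4 ≤ 131072 * exp (t ^ 2 / 256) := by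
    norm_num [Nat.factorial] at h
    nlinarith
  calc t ^ 4 * exp (-(t ^ 2 / 128)) ≤ 131072 * exp (t ^ 2 / 256) * exp (-(t ^ 2 / 128)) := by
        gcongr
    _ = 131072 * exp (-(t ^ 2 / 256)) := by rw [mul_assoc, ← exp_add]; ring_nf

lemma pow_mul_exp_neg_le_div_pow {t X : ℝ} {m q : ℕ} (hq : q ≤ 4) (ht : 1 ≤ t) (hX : 0 < X)
    (htX : 256 * m * log X ≤ t ^ 2) : t ^ q * exp (-(t ^ 2 / 128)) ≤ 131072 / X ^ m :=
  calc t ^ q * exp (-(t ^ 2 / 128)) ≤ t ^ 4 * exp (-(t ^ 2 / 128)) := by gcongr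
    _ ≤ 131072 * exp (-(t ^ 2 / 256)) := pow_four_mul_exp_neg_le t
    _ ≤ 131072 * exp (-(m * log X)) := by gcongr; linarith
    _ = 131072 / X ^ m := by rw [exp_neg, exp_nat_mul, exp_log hX, div_eq_mul_inv]

lemma le_sq_div_of_mul_sqrt_le {C s R L : ℝ} {m : ℕ} (hC : 16 * m ≤ C) (hs : 0 < s) (hL : 0 ≤ L)
    (h : C * s * √L ≤ R) : 256 * m * L ≤ (R / s) ^ 2 := by
  have ht : 16 * m * √L ≤ R / s := by
    rw [le_div_iff₀ hs]
    calc 16 * m * √L * s ≤ C * s * √L := by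
          rw [mul_right_comm]; gcongr
      _ ≤ R := h
  have hm : (m : ℝ) ≤ (m : ℝ) ^ 2 := by
    rcases Nat.eq_zero_or_pos m with rfl | hm
    · simp
    · exact le_self_pow₀ (by exact_mod_cast hm) two_ne_zero
  calc 256 * m * L ≤ (16 * m * √L) ^ 2 := by
        rw [mul_pow, mul_pow, sq_sqrt hL]; nlinarith
    _ ≤ (R / s) ^ 2 := by gcongr

section Mixture

variable {k : ℕ} {ps σs : Fin k → ℝ}

/-- `k ρ_σ ρ_π`, the quantity whose logarithm sets the separation scale. -/
noncomputable def separationScale (ps σs : Fin k → ℝ) : ℝ :=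
  k * (finSup σs / finInf σs * (finSup ps / finInf ps))

lemma two_le_separationScale (hk : 2 ≤ k) (hps : ∀ i, 0 < ps i) (hσs : ∀ i, 0 < σs i) :
    2 ≤ separationScale ps σs := by
  have i : Fin k := ⟨0, by omega⟩
  have hσ := one_le_finSup_div_finInf hσs i
  have hp := one_le_finSup_div_finInf hps i
  have hk' : (2 : ℝ) ≤ k := by exact_mod_cast hk
  calc (2 : ℝ) = 2 * (1 * 1) := by norm_num
    _ ≤ separationScale ps σs := by unfold separationScale; gcongr

lemma log_separationScale (hk : 1 ≤ k) (hps : ∀ i, 0 < ps i) (hσs : ∀ i, 0 < σs i) :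
    log (separationScale ps σs) =
      log k + log (finSup σs / finInf σs * (finSup ps / finInf ps)) := by
  have i : Fin k := ⟨0, by omega⟩
  have hσ := one_le_finSup_div_finInf hσs i
  have hp := one_le_finSup_div_finInf hps i
  exact log_mul (by positivity) (by positivity)

lemma mul_mul_pow_four_le_separationScale_pow (hk : 1 ≤ k) (hps : ∀ i, 0 < ps i)
    (hσs : ∀ i, 0 < σs i) :
    k * (finSup ps / finInf ps) * (finSup σs / finInf σs) ^ 4 ≤ separationScale ps σs ^ 4 := by
  have i : Fin k := ⟨0, by omega⟩
  have hσ := one_le_finSup_div_finInf hσs i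
  have hp := one_le_finSup_div_finInf hps i
  have hk' : (1 : ℝ) ≤ k := by exact_mod_cast hk
  calc k * (finSup ps / finInf ps) * (finSup σs / finInf σs) ^ 4
      ≤ k ^ 4 * (finSup ps / finInf ps) ^ 4 * (finSup σs / finInf σs) ^ 4 := by
        gcongr
        · exact le_self_pow₀ hk' (by norm_num)
        · exact le_self_pow₀ hp (by norm_num)
    _ = separationScale ps σs ^ 4 := by unfold separationScale; ring

lemma weighted_term_le (hps : ∀ i, 0 < ps i) (hσs : ∀ i, 0 < σs i) {i j : Fin k} {σ R X : ℝ}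
    {m q : ℕ} (hq : q ≤ 4) (hσ : finInf σs ≤ σ) (hR : 0 ≤ R) (hX : 2 ≤ X) (hm : 1 ≤ m)
    (hsep : 256 * m * log X ≤ (R / max (σs i) (σs j)) ^ 2) :
    (ps i + ps j) * (R / σ) ^ q * exp (-R ^ 2 / (128 * max (σs i) (σs j) ^ 2)) ≤
      2 * (finSup ps / finInf ps) * (finSup σs / finInf σs) ^ 4 * (131072 / X ^ m) * ps i := by
  have : Nonempty (Fin k) := ⟨i⟩
  set s := max (σs i) (σs j)
  set t := R / s
  have hσpos : 0 < σ := (finInf_pos hσs).trans_le hσ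
  have hs : 0 < s := (hσs i).trans_le (le_max_left _ _)
  have hρσ := one_le_finSup_div_finInf hσs i
  have hρπ := one_le_finSup_div_finInf hps i
  have ht : 1 ≤ t := by
    have hm' : (1 : ℝ) ≤ m := by exact_mod_cast hm
    have hlog : 1 / 2 ≤ log X := by
      linarith [log_two_gt_d9, log_le_log two_pos hX]
    nlinarith [div_nonneg hR hs.le]
  have hweight : ps i + ps j ≤ 2 * (finSup ps / finInf ps) * ps i :=
    add_le_two_mul_div_mul (finInf_pos hps) (finInf_le ps i) (le_finSup ps i) (le_finSup ps j)
  have hratio : (R / σ) ^ q ≤ (finSup σs / finInf σs) ^ 4 * t ^ q :=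
    calc (R / σ) ^ q ≤ (finSup σs / finInf σs * t) ^ q := by
          gcongr
          exact div_le_div_mul_div hR (finInf_pos hσs) hσ hs
            (max_le (le_finSup σs i) (le_finSup σs j))
      _ ≤ (finSup σs / finInf σs) ^ 4 * t ^ q := by rw [mul_pow]; gcongr
  have hexp : -R ^ 2 / (128 * s ^ 2) = -(t ^ 2 / 128) := by
    simp only [t, div_pow]; field_simp
  calc (ps i + ps j) * (R / σ) ^ q * exp (-R ^ 2 / (128 * s ^ 2))
      ≤ (2 * (finSup ps / finInf ps) * ps i) * ((finSup σs / finInf σs) ^ 4 * t ^ q) *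
          exp (-(t ^ 2 / 128)) := by
        rw [hexp]; gcongr; exact mul_nonneg (by linarith) (hps i).le
    _ = 2 * (finSup ps / finInf ps) * (finSup σs / finInf σs) ^ 4 *
          (t ^ q * exp (-(t ^ 2 / 128))) * ps i := by ring
    _ ≤ _ := by
        gcongr
        · exact (hps i).le
        · exact pow_mul_exp_neg_le_div_pow hq ht (by linarith) hsep

lemma sum_weighted_terms_le (hk : 2 ≤ k) (hps : ∀ i, 0 < ps i) (hσs : ∀ i, 0 < σs i)
    (one : Fin k) {σf R : Fin k → ℝ} {n q : ℕ} (hq : q ≤ 4) (hσf : ∀ j, finInf σs ≤ σf j)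
    (hR : ∀ j, 0 ≤ R j)
    (hsep : ∀ j ≠ one,
      256 * (n + 4 : ℕ) * log (separationScale ps σs) ≤ (R j / max (σs one) (σs j)) ^ 2) :
    ∑ j ∈ univ.erase one,
        (ps one + ps j) * (R j / σf j) ^ q * exp (-R j ^ 2 / (128 * max (σs one) (σs j) ^ 2))
      ≤ 262144 / separationScale ps σs ^ n * ps one := by
  set X := separationScale ps σs
  have hX : 2 ≤ X := two_le_separationScale hk hps hσs
  set B := 2 * (finSup ps / finInf ps) * (finSup σs / finInf σs) ^ 4 * (131072 / X ^ (n + 4)) *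
    ps one
  have hterm : ∀ j ∈ univ.erase one,
      (ps one + ps j) * (R j / σf j) ^ q * exp (-R j ^ 2 / (128 * max (σs one) (σs j) ^ 2)) ≤ B :=
    fun j hj ↦ weighted_term_le hps hσs hq (hσf j) (hR j) hX (by omega)
      (hsep j (ne_of_mem_erase hj))
  have hcard : ((univ.erase one).card : ℝ) ≤ k := by
    exact_mod_cast (card_erase_le.trans (card_univ.trans (Fintype.card_fin k)).le)
  have hscale := mul_mul_pow_four_le_separationScale_pow (by omega) hps hσs
  have hB : 0 ≤ B := by
    have hρπ := one_le_finSup_div_finInf hps one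
    have hρσ := one_le_finSup_div_finInf hσs one
    have hp := hps one
    positivity
  calc _ ≤ (univ.erase one).card • B := sum_le_card_nsmul _ _ _ hterm
    _ ≤ k * B := by
        rw [nsmul_eq_mul]
        gcongr
    _ = 262144 * (k * (finSup ps / finInf ps) * (finSup σs / finInf σs) ^ 4) / X ^ (n + 4) *
          ps one := by ring
    _ ≤ 262144 * X ^ 4 / X ^ (n + 4) * ps one := by gcongr; exact (hps one).le
    _ = 262144 / X ^ n * ps one := by rw [pow_add]; field_simp

end Mixture

/-- **Lemma: higher-order summed weight-error bounds.**
Under the separation `‖μ_i* − μ_j*‖ ≥ C (σ_i* ∨ σ_j*) √(log k + log(ρ_σ ρ_π))` for all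
`i ≠ j` (with a large enough universal constant `C ≥ 128`), for each `q ∈ {0,1,2,3,4}` both
`Σ_{j≠1} (π_1* + π_j*) (R_{j1}*/σ_1*)^q exp(−(R_{j1}*)²/(128 (σ_1* ∨ σ_j*)²)) ≤ c_q π_1*`
and the analogous sum with `σ_j*` in place of `σ_1*` hold, with constants `c_q` that can be
made arbitrarily small by taking `C` large enough. -/
theorem sum_pnorm_error_bounds (cq : ℝ) (hcq : 0 < cq) :
    ∃ C : ℝ, 128 ≤ C ∧
    ∀ (d k : ℕ), 1 ≤ d → 2 ≤ k →
    ∀ (ps : Fin k → ℝ) (μs : Fin k → EuclideanSpace ℝ (Fin d)) (σs : Fin k → ℝ),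
    (∀ i, 0 < ps i) → (∑ i, ps i = 1) → (∀ i, 0 < σs i) →
    (∀ i j, i ≠ j →
      C * max (σs i) (σs j) *
          Real.sqrt (Real.log k + Real.log (finSup σs / finInf σs * (finSup ps / finInf ps)))
        ≤ ‖μs i - μs j‖) →
    ∀ one : Fin k, (one : ℕ) = 0 →
    ∀ q ∈ ({0, 1, 2, 3, 4} : Finset ℕ),
      (∑ j ∈ Finset.univ.erase one,
          (ps one + ps j) * (‖μs j - μs one‖ / σs one) ^ q *
            Real.exp (-‖μs j - μs one‖ ^ 2 / (128 * max (σs one) (σs j) ^ 2))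
        ≤ cq * ps one) ∧
      ∑ j ∈ Finset.univ.erase one,
          (ps one + ps j) * (‖μs j - μs one‖ / σs j) ^ q *
            Real.exp (-‖μs j - μs one‖ ^ 2 / (128 * max (σs one) (σs j) ^ 2))
        ≤ cq * ps one := by
  obtain ⟨n, hn⟩ := exists_pow_lt_of_lt_one (by positivity : 0 < cq / 262144)
    (by norm_num : (1 / 2 : ℝ) < 1)
  refine ⟨128 * (n + 4 : ℕ), by push_cast; nlinarith, ?_⟩
  intro d k _ hk ps μs σs hps _ hσs hsep one _ q hq
  have hq4 : q ≤ 4 := by simp only [mem_insert, mem_singleton] at hq; omega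
  have hX := two_le_separationScale hk hps hσs
  have hsep' : ∀ j ≠ one, 256 * (n + 4 : ℕ) * log (separationScale ps σs) ≤
      (‖μs j - μs one‖ / max (σs one) (σs j)) ^ 2 := by
    intro j hj
    refine le_sq_div_of_mul_sqrt_le (C := 128 * (n + 4 : ℕ)) (by push_cast; nlinarith)
      ((hσs one).trans_le (le_max_left _ _)) (log_nonneg (by linarith)) ?_
    rw [log_separationScale (by omega) hps hσs, max_comm]
    exact hsep j one hj
  have hsmall : 262144 / separationScale ps σs ^ n * ps one ≤ cq * ps one := by
    refine mul_le_mul_of_nonneg_right ?_ (hps one).le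
    calc 262144 / separationScale ps σs ^ n ≤ 262144 / 2 ^ n := by gcongr
      _ = 262144 * (1 / 2) ^ n := by rw [one_div_pow, mul_one_div]
      _ ≤ cq := by linarith [(lt_div_iff₀' (by norm_num : (0:ℝ) < 262144)).1 hn]
  constructor
  · exact (sum_weighted_terms_le hk hps hσs one (σf := fun _ ↦ σs one) hq4
      (fun _ ↦ finInf_le σs one) (fun _ ↦ norm_nonneg _) hsep').trans hsmall
  · exact (sum_weighted_terms_le hk hps hσs one hq4 (finInf_le σs) (fun _ ↦ norm_nonneg _)
      hsep').trans hsmall
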